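/- Let Θ ⊂ ℝ^d be a compact semianalytic set of dimension d, p = (p_1,…,p_m): Θ → Δ_{m−1} a polynomial map, and p̂ ∈ p(Θ) with all entries positive. Let f(θ) = Σ_{i=1}^m p̂_i log(p̂_i / p_i(θ)) be the normalized log-likelihood and g(θ) = Σ_{i=1}^m (p_i(θ) − p̂_i)² the sum of squares of the generators of the ideal ⟨p_1(θ)−p̂_1,…,p_m(θ)−p̂_m⟩. Then rlct_Θ(f) = rlct_Θ(g); that is, for every t > 0, θ ↦ f(θ)^{−t} is integrable on Θ if and only if θ ↦ g(θ)^{−t} is integrable on Θ. -/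

import Mathlib

/-!
On the simplex, the Kullback–Leibler divergence `f(θ) = ∑ p̂ᵢ log (p̂ᵢ / pᵢ(θ))` is squeezed
between multiples of the squared distance `g(θ) = ∑ (pᵢ(θ) - p̂ᵢ)²`: the elementary bounds
`x log (x / y) ≥ (x - y) + (x - y)² / 2` (for `x, y ≤ 1`) and `x log (x / y) ≤ x (x / y - 1)`
give `g / 2 ≤ f ≤ ∑ (pᵢ - p̂ᵢ)² / pᵢ`, and near the zeros of `g` every `pᵢ` is at least
`minᵢ p̂ᵢ / 2`, so there `f ≤ (2 / minᵢ p̂ᵢ) g`. Away from the zeros both `f` and `g` are bounded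
below, so `f^{-t}` and `g^{-t}` are integrable on the compact set `Θ` together. The bounds
hold wherever all `pᵢ(θ) > 0`, which is almost everywhere since the zero set of a nonzero
polynomial is Lebesgue-null.
-/


open MeasureTheory Filter
open scoped ENNReal

namespace GeneralModel

/-- A set is semianalytic (in the global form used in the paper) if it is cut out by
finitely many inequalities `g i ≥ 0` with `g i` real analytic. -/
def Semianalytic {d : ℕ} (Θ : Set (Fin d → ℝ)) : Prop :=
  ∃ (l : ℕ) (g : Fin l → (Fin d → ℝ) → ℝ),
    (∀ i, AnalyticOnNhd ℝ (g i) Set.univ) ∧ Θ = {x | ∀ i, 0 ≤ g i x}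

/-- `M` is a `d'`-dimensional smooth submanifold of `ℝ^d`: near each of its points it is
the zero set of a smooth submersion into `ℝ^{d-d'}`. -/
def IsSmoothSubmanifold {d : ℕ} (d' : ℕ) (M : Set (Fin d → ℝ)) : Prop :=
  ∀ x ∈ M, ∃ U : Set (Fin d → ℝ), IsOpen U ∧ x ∈ U ∧
    ∃ F : (Fin d → ℝ) → (Fin (d - d') → ℝ),
      ContDiffOn ℝ ((⊤ : ℕ∞) : WithTop ℕ∞) F U ∧
      (∀ y ∈ U, Function.Surjective (fderiv ℝ F y)) ∧
      M ∩ U = {y ∈ U | F y = 0}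

/-- A map `p : ℝ^d → ℝ^m` is polynomial if each coordinate function is given by a
polynomial. -/
def IsPolynomialMap {d m : ℕ} (p : Fin m → (Fin d → ℝ) → ℝ) : Prop :=
  ∀ i, ∃ P : MvPolynomial (Fin d) ℝ, ∀ x, p i x = MvPolynomial.eval x P

/-- The marginal likelihood `Z(N) = ∫_Θ ∏_i p_i(θ)^{N p̂_i} φ(θ) dθ`. -/
noncomputable def margLik {d m : ℕ} (Θ : Set (Fin d → ℝ)) (p : Fin m → (Fin d → ℝ) → ℝ)
    (phat : Fin m → ℝ) (φ : (Fin d → ℝ) → ℝ) (N : ℕ) : ℝ :=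
  ∫ θ in Θ, (∏ i, p i θ ^ ((N : ℝ) * phat i)) * φ θ

/-- The maximal value `ℓ̂_N = N ∑_i p̂_i log p̂_i` of the log-likelihood. -/
noncomputable def maxLogLik {m : ℕ} (phat : Fin m → ℝ) (N : ℕ) : ℝ :=
  (N : ℝ) * ∑ i, phat i * Real.log (phat i)

end GeneralModel

open GeneralModel


/-- The real log-canonical threshold of a nonnegative function `f` on `Θ`, in its
integrability characterization: `rlct_Θ(f) = sup {t > 0 : ∫_Θ f^{-t} < ∞}`. -/
noncomputable def rlct {d : ℕ} (Θ : Set (Fin d → ℝ)) (f : (Fin d → ℝ) → ℝ) : ℝ :=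
  sSup {t : ℝ | 0 < t ∧ IntegrableOn (fun θ => f θ ^ (-t)) Θ volume}

theorem Polynomial.ae_eval_ne_zero {μ : Measure ℝ} [NullSingletonClass μ] {p : Polynomial ℝ}
    (hp : p ≠ 0) : ∀ᵐ y ∂μ, p.eval y ≠ 0 :=
  measure_mono_null (fun y hy => by simpa using hy)
    ((Polynomial.finite_setOfPred_isRoot hp).measure_zero μ)

theorem MvPolynomial.ae_eval_ne_zero {n : ℕ} {P : MvPolynomial (Fin n) ℝ} (hP : P ≠ 0) :
    ∀ᵐ x ∂volume, eval x P ≠ 0 := by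
  induction n with
  | zero =>
    refine Eventually.of_forall fun x hx => hP (MvPolynomial.funext fun y => ?_)
    rwa [Subsingleton.elim y x, map_zero]
  | succ n ih =>
    -- Fubini over `x = Fin.cons y s`: for a.e. `s` the `k`-th coefficient of `P` in `y` survives
    obtain ⟨k, hk⟩ : ∃ k, (finSuccEquiv ℝ n P).coeff k ≠ 0 := by
      by_contra! h
      exact hP ((map_eq_zero_iff _ (AlgEquiv.injective _)).mp (Polynomial.ext h))
    have hslices : ∀ᵐ s ∂volume, ∀ᵐ y ∂volume, eval (Fin.cons y s : Fin (n + 1) → ℝ) P ≠ 0 := by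
      filter_upwards [ih hk] with s hs
      simp_rw [eval_eq_eval_mv_eval']
      refine Polynomial.ae_eval_ne_zero fun h => hs ?_
      simpa [Polynomial.coeff_map] using congrArg (Polynomial.coeff · k) h
    have hcons := (volume_preserving_piFinSuccAbove (fun _ : Fin (n + 1) => ℝ) 0).symm
    have hcons_eq : ⇑(MeasurableEquiv.piFinSuccAbove (fun _ => ℝ) 0).symm =
        fun z : ℝ × (Fin n → ℝ) => (Fin.cons z.1 z.2 : Fin (n + 1) → ℝ) := by
      ext z : 1
      simp [MeasurableEquiv.piFinSuccAbove_symm_apply, Fin.consEquiv]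
    rw [hcons_eq] at hcons
    have hS : MeasurableSet {x | eval x P ≠ 0} :=
      (isOpen_ne_fun (continuous_eval P) continuous_const).measurableSet
    rw [← hcons.map_eq, ae_map_iff hcons.measurable.aemeasurable hS, Measure.volume_eq_prod]
    exact (Measure.ae_prod_iff_ae_ae (hcons.measurable hS)).2
      ((Measure.ae_ae_comm (p := fun s y => eval (Fin.cons y s : Fin (n + 1) → ℝ) P ≠ 0)
        (hcons.measurable.comp measurable_swap hS)).1 hslices)

theorem mul_log_div_le_sq_div_add_sub {x y : ℝ} (hx : 0 ≤ x) (hy : 0 < y) :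
    x * Real.log (x / y) ≤ (x - y) ^ 2 / y + (x - y) := by
  rcases hx.eq_or_lt with rfl | hx
  · rw [zero_mul, zero_sub, neg_sq, sq, mul_self_div_self, add_neg_cancel]
  calc x * Real.log (x / y) ≤ x * (x / y - 1) :=
        mul_le_mul_of_nonneg_left (Real.log_le_sub_one_of_pos (by positivity)) hx.le
    _ = (x - y) ^ 2 / y + (x - y) := by field_simp; ring

theorem sub_add_sq_div_two_le_mul_log_div {x y : ℝ} (hx₀ : 0 < x) (hx₁ : x ≤ 1) (hy₀ : 0 < y)
    (hy₁ : y ≤ 1) : (x - y) + (x - y) ^ 2 / 2 ≤ x * Real.log (x / y) := by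
  -- `h` vanishes at `x` and `h' t = (t - x) (1 - t) / t`, so `x` minimises `h` on `(0, 1]`
  set h : ℝ → ℝ := fun t => x * (Real.log x - Real.log t) - (x - t) - (x - t) ^ 2 / 2
  set h' : ℝ → ℝ := fun t => (t - x) * (1 - t) / t
  have hderiv : ∀ t, 0 < t → HasDerivAt h (h' t) t := by
    intro t ht
    have := ((((Real.hasDerivAt_log ht.ne').const_sub (Real.log x)).const_mul x).sub
      ((hasDerivAt_id t).const_sub x)).sub ((((hasDerivAt_id t).const_sub x).pow 2).div_const 2)
    exact this.congr_deriv (by simp only [id, h']; field_simp; ring)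
  have hcont : ∀ a, 0 < a → ∀ b, ContinuousOn h (Set.Icc a b) := fun a ha b t ht =>
    (hderiv t (ha.trans_le ht.1)).continuousAt.continuousWithinAt
  have hmin : h x ≤ h y := by
    rcases le_total y x with hyx | hxy
    · refine antitoneOn_of_hasDerivWithinAt_nonpos (f' := h') (convex_Icc y x) (hcont y hy₀ x)
        (fun t ht => ?_) (fun t ht => ?_) (Set.left_mem_Icc.2 hyx) (Set.right_mem_Icc.2 hyx) hyx
      all_goals rw [interior_Icc] at ht
      · exact (hderiv t (hy₀.trans ht.1)).hasDerivWithinAt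
      · exact div_nonpos_of_nonpos_of_nonneg
          (mul_nonpos_of_nonpos_of_nonneg (by linarith [ht.2]) (by linarith [ht.2]))
          (hy₀.trans ht.1).le
    · refine monotoneOn_of_hasDerivWithinAt_nonneg (f' := h') (convex_Icc x y) (hcont x hx₀ y)
        (fun t ht => ?_) (fun t ht => ?_) (Set.left_mem_Icc.2 hxy) (Set.right_mem_Icc.2 hxy) hxy
      all_goals rw [interior_Icc] at ht
      · exact (hderiv t (hx₀.trans ht.1)).hasDerivWithinAt
      · exact div_nonneg (mul_nonneg (by linarith [ht.1]) (by linarith [ht.2]))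
          (hx₀.trans ht.1).le
  simp only [h, sub_self] at hmin
  rw [Real.log_div hx₀.ne' hy₀.ne']
  nlinarith

section KullbackLeibler

variable {ι : Type*} [Fintype ι] {q r : ι → ℝ}

theorem sum_sq_sub_div_two_le_sum_mul_log_div (hq₀ : ∀ i, 0 < q i) (hr₀ : ∀ i, 0 < r i)
    (hq : ∑ i, q i = 1) (hr : ∑ i, r i = 1) :
    (∑ i, (r i - q i) ^ 2) / 2 ≤ ∑ i, q i * Real.log (q i / r i) := by
  have le_one : ∀ {x : ι → ℝ}, (∀ i, 0 < x i) → ∑ i, x i = 1 → ∀ i, x i ≤ 1 := fun hx₀ hx i =>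
    hx ▸ Finset.single_le_sum (fun j _ => (hx₀ j).le) (Finset.mem_univ i)
  calc (∑ i, (r i - q i) ^ 2) / 2 = ∑ i, ((q i - r i) + (q i - r i) ^ 2 / 2) := by
        rw [Finset.sum_add_distrib, Finset.sum_sub_distrib, hq, hr, sub_self, zero_add,
          Finset.sum_div]
        exact Finset.sum_congr rfl fun i _ => by ring
    _ ≤ ∑ i, q i * Real.log (q i / r i) := Finset.sum_le_sum fun i _ =>
        sub_add_sq_div_two_le_mul_log_div (hq₀ i) (le_one hq₀ hq i) (hr₀ i) (le_one hr₀ hr i)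

theorem sum_mul_log_div_le_sum_sq_div (hq₀ : ∀ i, 0 ≤ q i) (hr₀ : ∀ i, 0 < r i)
    (hsum : ∑ i, r i = ∑ i, q i) :
    ∑ i, q i * Real.log (q i / r i) ≤ ∑ i, (r i - q i) ^ 2 / r i :=
  calc ∑ i, q i * Real.log (q i / r i) ≤ ∑ i, ((q i - r i) ^ 2 / r i + (q i - r i)) :=
        Finset.sum_le_sum fun i _ => mul_log_div_le_sq_div_add_sub (hq₀ i) (hr₀ i)
    _ = ∑ i, (r i - q i) ^ 2 / r i := by
        rw [Finset.sum_add_distrib, Finset.sum_sub_distrib, hsum, sub_self, add_zero]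
        exact Finset.sum_congr rfl fun i _ => by ring

theorem sum_mul_log_div_le_two_div_mul_sum_sq {ε : ℝ} (hε : 0 < ε) (hq : ∀ i, ε ≤ q i)
    (hsum : ∑ i, r i = ∑ i, q i) (hclose : ∑ i, (r i - q i) ^ 2 < (ε / 2) ^ 2) :
    ∑ i, q i * Real.log (q i / r i) ≤ 2 / ε * ∑ i, (r i - q i) ^ 2 := by
  have hr : ∀ i, ε / 2 ≤ r i := fun i => by
    have hsq : (r i - q i) ^ 2 < (ε / 2) ^ 2 :=
      (Finset.single_le_sum (f := fun j => (r j - q j) ^ 2) (fun _ _ => sq_nonneg _)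
        (Finset.mem_univ i)).trans_lt hclose
    linarith [hq i, (abs_lt.1 (abs_lt_of_sq_lt_sq hsq (by positivity))).1]
  refine (sum_mul_log_div_le_sum_sq_div (fun i => hε.le.trans (hq i))
    (fun i => (half_pos hε).trans_le (hr i)) hsum).trans ?_
  rw [Finset.mul_sum]
  gcongr with i
  rw [div_eq_inv_mul, ← inv_div]
  gcongr
  exact hr i

end KullbackLeibler

theorem rpow_neg_le_mul_rpow_neg_add {a b C δ t : ℝ} (ht : 0 < t) (hC : 0 < C) (hδ : 0 < δ)
    (hb : 0 ≤ b) (hab : 0 < b → b < δ → 0 < a ∧ a ≤ C * b) :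
    b ^ (-t) ≤ C ^ t * ‖a ^ (-t)‖ + δ ^ (-t) := by
  have hCa : 0 ≤ C ^ t * ‖a ^ (-t)‖ := by positivity
  rcases hb.eq_or_lt with rfl | hb
  · -- `Real.rpow` has `0 ^ (-t) = 0`
    rw [Real.zero_rpow (by linarith)]
    positivity
  rcases le_or_gt δ b with hδb | hbδ
  · linarith [Real.rpow_le_rpow_of_nonpos hδ hδb (by linarith : -t ≤ 0)]
  obtain ⟨ha, haCb⟩ := hab hb hbδ
  calc b ^ (-t) ≤ (a / C) ^ (-t) :=
        Real.rpow_le_rpow_of_nonpos (by positivity) ((div_le_iff₀' hC).2 haCb) (by linarith)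
    _ = C ^ t * ‖a ^ (-t)‖ := by
        rw [Real.div_rpow ha.le hC.le, Real.rpow_neg hC.le, Real.norm_of_nonneg (by positivity)]
        field_simp
    _ ≤ C ^ t * ‖a ^ (-t)‖ + δ ^ (-t) := le_add_of_nonneg_right (by positivity)

theorem MeasureTheory.IntegrableOn.rpow_neg_of_le_mul {α : Type*} [MeasurableSpace α]
    {μ : Measure α} {s : Set α} {f g : α → ℝ} {t C δ : ℝ} (hs : μ s ≠ ⊤) (ht : 0 < t)
    (hC : 0 < C) (hδ : 0 < δ)
    (hf : IntegrableOn (fun x => f x ^ (-t)) s μ) (hg : AEMeasurable g (μ.restrict s))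
    (hg₀ : ∀ᵐ x ∂μ.restrict s, 0 ≤ g x)
    (hfg : ∀ᵐ x ∂μ.restrict s, 0 < g x → g x < δ → 0 < f x ∧ f x ≤ C * g x) :
    IntegrableOn (fun x => g x ^ (-t)) s μ := by
  refine Integrable.mono' ((hf.norm.const_mul (C ^ t)).add (integrableOn_const (C := δ ^ (-t)) hs))
    (hg.pow_const _).aestronglyMeasurable ?_
  filter_upwards [hg₀, hfg] with x hx₀ hx
  rw [Real.norm_of_nonneg (Real.rpow_nonneg hx₀ _)]
  exact rpow_neg_le_mul_rpow_neg_add ht hC hδ hx₀ hx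

theorem integrableOn_rpow_neg_iff_of_le_mul {α : Type*} [MeasurableSpace α] {μ : Measure α}
    {s : Set α} {f g : α → ℝ} {t c C δ : ℝ} (hs : μ s ≠ ⊤) (ht : 0 < t) (hc : 0 < c) (hC : 0 < C)
    (hδ : 0 < δ) (hf : AEMeasurable f (μ.restrict s)) (hg : AEMeasurable g (μ.restrict s))
    (hg₀ : ∀ᵐ x ∂μ.restrict s, 0 ≤ g x) (hgf : ∀ᵐ x ∂μ.restrict s, c * g x ≤ f x)
    (hfg : ∀ᵐ x ∂μ.restrict s, g x < δ → f x ≤ C * g x) :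
    IntegrableOn (fun x => f x ^ (-t)) s μ ↔ IntegrableOn (fun x => g x ^ (-t)) s μ := by
  constructor
  · refine fun hfi => hfi.rpow_neg_of_le_mul hs ht hC hδ hg hg₀ ?_
    filter_upwards [hgf, hfg] with x hgfx hfgx hgx hgδ
    exact ⟨(mul_pos hc hgx).trans_le hgfx, hfgx hgδ⟩
  · refine fun hgi => hgi.rpow_neg_of_le_mul hs ht (inv_pos.2 hc) hδ hf ?_ ?_
    · filter_upwards [hg₀, hgf] with x hgx hgfx
      exact (mul_nonneg hc.le hgx).trans hgfx
    · filter_upwards [hg₀, hgf, hfg] with x hgx hgfx hfgx hfx _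
      refine ⟨hgx.lt_of_ne' fun hg0 => ?_, (le_inv_mul_iff₀ hc).2 hgfx⟩
      -- a zero of `g` is a zero of `f`
      have := hfgx (hg0 ▸ hδ)
      rw [hg0, mul_zero] at this
      exact this.not_gt hfx

namespace GeneralModel

theorem IsPolynomialMap.continuous {d m : ℕ} {p : Fin m → (Fin d → ℝ) → ℝ}
    (hp : IsPolynomialMap p) (i : Fin m) : Continuous (p i) := by
  obtain ⟨P, hP⟩ := hp i
  simpa only [← funext hP] using MvPolynomial.continuous_eval P

theorem IsPolynomialMap.ae_ne_zero {d m : ℕ} {p : Fin m → (Fin d → ℝ) → ℝ}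
    (hp : IsPolynomialMap p) {i : Fin m} {θ₀ : Fin d → ℝ} (hθ₀ : p i θ₀ ≠ 0) :
    ∀ᵐ θ ∂volume, p i θ ≠ 0 := by
  obtain ⟨P, hP⟩ := hp i
  simp only [hP] at hθ₀ ⊢
  exact MvPolynomial.ae_eval_ne_zero fun h => hθ₀ (by rw [h, map_zero])

end GeneralModel

theorem rlct_loglik_eq_rlct_ideal_general {d m : ℕ}
    (Θ : Set (Fin d → ℝ)) (hΘc : IsCompact Θ)
    (p : Fin m → (Fin d → ℝ) → ℝ) (hp : IsPolynomialMap p)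
    (hsimplex : ∀ θ ∈ Θ, (∀ i, 0 ≤ p i θ) ∧ ∑ i, p i θ = 1)
    (phat : Fin m → ℝ)
    (hmodel : ∃ θ ∈ Θ, ∀ i, p i θ = phat i)
    (hpos : ∀ i, 0 < phat i) :
    rlct Θ (fun θ => ∑ i, phat i * Real.log (phat i / p i θ))
      = rlct Θ (fun θ => ∑ i, (p i θ - phat i) ^ 2) ∧
    ∀ t : ℝ, 0 < t →
      (IntegrableOn
          (fun θ => (∑ i, phat i * Real.log (phat i / p i θ)) ^ (-t)) Θ volume ↔
        IntegrableOn (fun θ => (∑ i, (p i θ - phat i) ^ 2) ^ (-t)) Θ volume) := by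
  obtain ⟨θ₀, hθ₀, hpθ₀⟩ := hmodel
  have hsum : ∑ i, phat i = 1 := by simpa [hpθ₀] using (hsimplex θ₀ hθ₀).2
  obtain ⟨i₀, -, hmin⟩ := Finset.exists_min_image Finset.univ phat
    (Finset.nonempty_of_sum_ne_zero (f := phat) (by simp [hsum]))
  have hne : ∀ᵐ θ ∂volume, ∀ i, p i θ ≠ 0 := ae_all_iff.2 fun i =>
    hp.ae_ne_zero (θ₀ := θ₀) ((hpθ₀ i).trans_ne (hpos i).ne')
  have hbounds : ∀ᵐ θ ∂volume.restrict Θ,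
      2⁻¹ * ∑ i, (p i θ - phat i) ^ 2 ≤ ∑ i, phat i * Real.log (phat i / p i θ) ∧
      (∑ i, (p i θ - phat i) ^ 2 < (phat i₀ / 2) ^ 2 →
        ∑ i, phat i * Real.log (phat i / p i θ) ≤ 2 / phat i₀ * ∑ i, (p i θ - phat i) ^ 2) := by
    filter_upwards [ae_restrict_mem hΘc.measurableSet, ae_restrict_of_ae hne] with θ hθ hθne
    obtain ⟨hθ₀, hθ₁⟩ := hsimplex θ hθ
    have hθpos : ∀ i, 0 < p i θ := fun i => (hθ₀ i).lt_of_ne' (hθne i)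
    refine ⟨?_, sum_mul_log_div_le_two_div_mul_sum_sq (hpos i₀)
      (fun i => hmin i (Finset.mem_univ i)) (hθ₁.trans hsum.symm)⟩
    rw [inv_mul_eq_div]
    exact sum_sq_sub_div_two_le_sum_mul_log_div hpos hθpos hsum hθ₁
  have hpc := hp.continuous
  have hiff := fun (t : ℝ) (ht : 0 < t) =>
    integrableOn_rpow_neg_iff_of_le_mul hΘc.measure_lt_top.ne ht
    (inv_pos.2 two_pos) (div_pos two_pos (hpos i₀)) (pow_pos (half_pos (hpos i₀)) 2)
    (by fun_prop) (by fun_prop) (ae_of_all _ fun θ => by positivity)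
    (hbounds.mono fun _ h => h.1) (hbounds.mono fun _ h => h.2)
  exact ⟨congrArg sSup (Set.ext fun t => and_congr_right (hiff t)), hiff⟩

/-- Theorem 4.1 of the paper, in its integrability form.  Let `Θ ⊂ ℝ^d`
be a compact semianalytic set of dimension `d`, `p : Θ → Δ_{m−1}` a polynomial map,
`p̂ ∈ p(Θ)` with positive entries, `f(θ) = ∑_i p̂_i log(p̂_i/p_i(θ))` the normalized
log-likelihood and `g(θ) = ∑_i (p_i(θ) − p̂_i)²` the sum of squares of the generators of
the ideal `⟨p_1(θ) − p̂_1, …, p_m(θ) − p̂_m⟩`.  Then `rlct_Θ(f) = rlct_Θ(g)`: for every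
`t > 0`, `f^{-t}` is integrable on `Θ` if and only if `g^{-t}` is. -/
theorem rlct_loglik_eq_rlct_ideal {d m : ℕ}
    (Θ : Set (Fin d → ℝ)) (hΘc : IsCompact Θ) (hΘsa : Semianalytic Θ)
    (hΘdim : dimH Θ = (d : ℝ≥0∞))
    (p : Fin m → (Fin d → ℝ) → ℝ) (hp : IsPolynomialMap p)
    (hsimplex : ∀ θ ∈ Θ, (∀ i, 0 ≤ p i θ) ∧ ∑ i, p i θ = 1)
    (phat : Fin m → ℝ)
    (hmodel : ∃ θ ∈ Θ, ∀ i, p i θ = phat i)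
    (hpos : ∀ i, 0 < phat i) :
    rlct Θ (fun θ => ∑ i, phat i * Real.log (phat i / p i θ))
      = rlct Θ (fun θ => ∑ i, (p i θ - phat i) ^ 2) ∧
    ∀ t : ℝ, 0 < t →
      (IntegrableOn
          (fun θ => (∑ i, phat i * Real.log (phat i / p i θ)) ^ (-t)) Θ volume ↔
        IntegrableOn (fun θ => (∑ i, (p i θ - phat i) ^ 2) ^ (-t)) Θ volume) :=
  rlct_loglik_eq_rlct_ideal_general Θ hΘc p hp hsimplex phat hmodel hpos
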